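/- Let a_1,...,a_n ∈ ℤ^n be linearly independent with matrix A, let UAV = S be a Smith normal form factorization with diagonal entries s_1 | s_2 | ... | s_n, and let r be the number of odd s_i. Given c ∈ (ℝ*)^n, set c' = c^V. Then the binomial system x^{a_i} = c_i (i = 1,...,n) has exactly 2^{n-r} roots in (ℝ*)^n if c'_i > 0 for all i ≥ r+1, and exactly 0 roots in (ℝ*)^n if c'_i < 0 for some i ≥ r+1. -/

import Mathlib

/-!
For an integer matrix `M`, the monomial map `x ↦ x^M` on `(ℝ*)ⁿ` satisfies `x^(MN) = (x^M)^N`, so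
unimodular matrices act on `(ℝ*)ⁿ` by bijections. As `AV = U⁻¹S`, applying `V` to the system
`x^A = c` and substituting `y = x^(U⁻¹)` turns it into the decoupled system `y_j^(s_j) = c'_j`.
The `s_j` are nonzero because `A` is nonsingular, and in `ℝ*` the equation `t^s = d` has one
solution for odd `s`, two for even `s` and `d > 0`, and none for even `s` and `d < 0`.
-/

open Finset Matrix

section Monomial

variable {G : Type*} [CommGroup G] {l m n : Type*} [Fintype l] [Fintype m]

theorem zpow_finset_sum (a : G) {ι : Type*} (s : Finset ι) (f : ι → ℤ) :
    a ^ ∑ i ∈ s, f i = ∏ i ∈ s, a ^ f i := by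
  classical
  induction s using Finset.induction_on with
  | empty => simp
  | insert i s hi ih => rw [sum_insert hi, prod_insert hi, _root_.zpow_add, ih]

def monomialMap (M : Matrix m n ℤ) (x : m → G) : n → G :=
  fun j => ∏ k, x k ^ M k j

theorem monomialMap_mul (M : Matrix l m ℤ) (N : Matrix m n ℤ) (x : l → G) :
    monomialMap (M * N) x = monomialMap N (monomialMap M x) := by
  funext j
  simp only [monomialMap, mul_apply, ← prod_zpow, ← _root_.zpow_mul, zpow_finset_sum]
  exact prod_comm

theorem monomialMap_diagonal [DecidableEq m] (d : m → ℤ) (x : m → G) :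
    monomialMap (diagonal d) x = fun j => x j ^ d j := by
  funext j
  refine (prod_eq_single j (fun k _ hkj => ?_) (by simp)).trans (by simp)
  rw [diagonal_apply_ne _ hkj, zpow_zero]

theorem monomialMap_one [DecidableEq m] (x : m → G) : monomialMap 1 x = x := by
  simp [← diagonal_one, monomialMap_diagonal]

variable [DecidableEq m]

noncomputable def monomialEquiv {M : Matrix m m ℤ} (hM : IsUnit M.det) : (m → G) ≃ (m → G) where
  toFun := monomialMap M
  invFun := monomialMap M⁻¹
  left_inv x := by rw [← monomialMap_mul, mul_nonsing_inv _ hM, monomialMap_one]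
  right_inv x := by rw [← monomialMap_mul, nonsing_inv_mul _ hM, monomialMap_one]

noncomputable def monomialSolutionsEquivOfSmith {A U V : Matrix m m ℤ} {d : m → ℤ}
    (hU : IsUnit U.det) (hV : IsUnit V.det) (hUAV : U * A * V = diagonal d) (c : m → G) :
    {x : m → G // monomialMap A x = c} ≃ ∀ j, {t : G // t ^ d j = monomialMap V c j} :=
  have hAV : A * V = U⁻¹ * diagonal d := by
    rw [← hUAV, mul_assoc, ← mul_assoc U⁻¹, nonsing_inv_mul _ hU, one_mul]
  ((monomialEquiv (isUnit_nonsing_inv_det U hU)).subtypeEquiv fun x => by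
    rw [← (monomialEquiv (G := G) hV).injective.eq_iff, funext_iff]
    simp only [monomialEquiv, Equiv.coe_fn_mk, ← monomialMap_mul, hAV]
    rw [monomialMap_mul, monomialMap_diagonal]).trans Equiv.subtypePiEquivPi

end Monomial

theorem Units.val_monomialMap {G₀ : Type*} [CommGroupWithZero G₀] {m n : Type*} [Fintype m]
    (M : Matrix m n ℤ) (y : m → G₀ˣ) (j : n) :
    ((monomialMap M y j : G₀ˣ) : G₀) = ∏ k, (y k : G₀) ^ M k j := by
  simp [monomialMap, Units.val_zpow_eq_zpow_val]

noncomputable def unitsMonomialSolutionsEquiv {G₀ : Type*} [CommGroupWithZero G₀] {m n : Type*}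
    [Fintype m] (M : Matrix m n ℤ) (c : n → G₀ˣ) :
    {x : m → G₀ // (∀ i, x i ≠ 0) ∧ ∀ j, ∏ k, x k ^ M k j = c j} ≃
      {y : m → G₀ˣ // monomialMap M y = c} where
  toFun x := ⟨fun i => Units.mk0 (x.1 i) (x.2.1 i),
    funext fun j => Units.ext (by rw [Units.val_monomialMap]; exact x.2.2 j)⟩
  invFun y := ⟨fun i => y.1 i, fun i => (y.1 i).ne_zero,
    fun j => by rw [← Units.val_monomialMap, y.2]⟩
  left_inv _ := rfl
  right_inv _ := Subtype.ext (funext fun _ => Units.ext rfl)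

theorem Matrix.diagonal_ne_zero_of_mul_mul_eq {R : Type*} [CommRing R] [IsDomain R]
    {m : Type*} [Fintype m] [DecidableEq m] {A U V : Matrix m m R} {d : m → R}
    (hA : A.det ≠ 0) (hU : IsUnit U.det) (hV : IsUnit V.det) (h : U * A * V = diagonal d)
    (j : m) : d j ≠ 0 := by
  have hdet := congrArg det h
  rw [det_mul, det_mul, det_diagonal] at hdet
  exact prod_ne_zero_iff.1 (hdet ▸ mul_ne_zero (mul_ne_zero hU.ne_zero hA) hV.ne_zero) j
    (mem_univ j)

theorem Matrix.det_ne_zero_of_linearIndependent_intCast_cols {m : Type*} [Fintype m]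
    [DecidableEq m] {A : Matrix m m ℤ} (h : LinearIndependent ℚ fun j i => (A i j : ℚ)) :
    A.det ≠ 0 := by
  have hdet := ((linearIndependent_cols_iff_isUnit (A := A.map (Int.cast : ℤ → ℚ))).1 h
    |> (isUnit_iff_isUnit_det _).1).ne_zero
  rw [← Int.cast_det] at hdet
  exact_mod_cast hdet

theorem Units.natCard_pow_eq {G₀ : Type*} [GroupWithZero G₀] {m : ℕ} (hm : m ≠ 0) (u : G₀ˣ) :
    Nat.card {t : G₀ˣ // t ^ m = u} = {t : G₀ | t ^ m = u}.ncard := by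
  rw [← Nat.card_coe_set_eq]
  exact Nat.card_congr
    { toFun t := ⟨t.1, by simp [← Units.val_pow_eq_pow_val, t.2]⟩
      invFun t := ⟨Units.mk0 t.1 (ne_zero_pow hm (t.2.symm ▸ u.ne_zero)), Units.ext t.2⟩
      left_inv _ := Subtype.ext (Units.ext rfl)
      right_inv _ := Subtype.ext rfl }

theorem Units.exists_natCard_zpow_eq {G₀ : Type*} [GroupWithZero G₀] {s : ℤ} (hs : s ≠ 0)
    (d : G₀ˣ) : ∃ e : G₀ˣ, (e = d ∨ e = d⁻¹) ∧
      Nat.card {t : G₀ˣ // t ^ s = d} = {t : G₀ | t ^ s.natAbs = e}.ncard := by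
  have hm : s.natAbs ≠ 0 := Int.natAbs_ne_zero.2 hs
  simp only [← Units.natCard_pow_eq hm]
  obtain ⟨m, rfl | rfl⟩ := Int.eq_nat_or_neg s
  · exact ⟨d, .inl rfl, Nat.card_congr (Equiv.subtypeEquivRight fun t => by simp)⟩
  · refine ⟨d⁻¹, .inr rfl, Nat.card_congr (Equiv.subtypeEquivRight fun t => ?_)⟩
    rw [_root_.zpow_neg, zpow_natCast, Int.natAbs_neg, Int.natAbs_natCast, inv_eq_iff_eq_inv]

namespace Real

theorem exists_pow_eq_of_odd {m : ℕ} (hm : Odd m) (e : ℝ) : ∃ w : ℝ, w ^ m = e := by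
  have hm0 : m ≠ 0 := hm.pos.ne'
  rcases le_total 0 e with he | he
  · exact ⟨e ^ (m⁻¹ : ℝ), rpow_inv_natCast_pow he hm0⟩
  · refine ⟨-(-e) ^ (m⁻¹ : ℝ), ?_⟩
    rw [hm.neg_pow, rpow_inv_natCast_pow (neg_nonneg.2 he) hm0, neg_neg]

theorem ncard_setOf_pow_eq_of_odd {m : ℕ} (hm : Odd m) (e : ℝ) :
    {t : ℝ | t ^ m = e}.ncard = 1 := by
  obtain ⟨w, rfl⟩ := exists_pow_eq_of_odd hm e
  simp [hm.pow_inj]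

theorem ncard_setOf_pow_eq_of_even {m : ℕ} (hm : Even m) (hm0 : m ≠ 0) {e : ℝ}
    (he : 0 < e) : {t : ℝ | t ^ m = e}.ncard = 2 := by
  have hw : 0 < e ^ (m⁻¹ : ℝ) := rpow_pos_of_pos he _
  have hroots : {t : ℝ | t ^ m = e} = {e ^ (m⁻¹ : ℝ), -e ^ (m⁻¹ : ℝ)} := by
    ext t
    nth_rw 1 [← rpow_inv_natCast_pow he.le hm0]
    simp [pow_eq_pow_iff_of_ne_zero hm0, hm]
  rw [hroots, Set.ncard_pair (by linarith)]

theorem units_natCard_zpow_eq_of_odd {s : ℤ} (hs : Odd s) (d : ℝˣ) :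
    Nat.card {t : ℝˣ // t ^ s = d} = 1 := by
  obtain ⟨e, -, he⟩ := Units.exists_natCard_zpow_eq (s := s) (by rintro rfl; simp at hs) d
  rw [he, ncard_setOf_pow_eq_of_odd (Int.natAbs_odd.2 hs)]

theorem units_natCard_zpow_eq_of_even {s : ℤ} (hs : Even s) (hs0 : s ≠ 0) {d : ℝˣ}
    (hd : 0 < (d : ℝ)) : Nat.card {t : ℝˣ // t ^ s = d} = 2 := by
  obtain ⟨e, hed, he⟩ := Units.exists_natCard_zpow_eq hs0 d
  have he0 : 0 < (e : ℝ) := by rcases hed with rfl | rfl <;> simpa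
  rw [he, ncard_setOf_pow_eq_of_even (Int.natAbs_even.2 hs) (Int.natAbs_ne_zero.2 hs0) he0]

theorem units_zpow_ne_of_even {s : ℤ} (hs : Even s) {d : ℝˣ} (hd : (d : ℝ) < 0) (t : ℝˣ) :
    t ^ s ≠ d := fun h => by
  have := hs.zpow_nonneg (t : ℝ)
  rw [← Units.val_zpow_eq_zpow_val, h] at this
  linarith

end Real

theorem Fin.prod_ite_lt_eq_pow {M : Type*} [CommMonoid M] (n r : ℕ) (a : M) :
    ∏ j : Fin n, (if (j : ℕ) < r then 1 else a) = a ^ (n - r) := by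
  rw [Fin.prod_univ_eq_prod_range (fun j => if j < r then 1 else a)]
  induction n with
  | zero => simp
  | succ n ih =>
    rw [prod_range_succ, ih]
    by_cases h : n < r
    · simp [h, Nat.sub_eq_zero_of_le h.le, Nat.sub_eq_zero_of_le h]
    · rw [if_neg h, Nat.sub_add_comm (not_lt.1 h), pow_succ]

theorem stmt8_general {n : ℕ} (A U V S : Matrix (Fin n) (Fin n) ℤ)
    (hindep : LinearIndependent ℚ fun j => fun i => (A i j : ℚ))
    (hU : IsUnit U.det) (hV : IsUnit V.det)
    (hUAV : U * A * V = S)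
    (hdiag : ∀ i j, i ≠ j → S i j = 0)
    (r : ℕ) (hr : ∀ i : Fin n, Odd (S i i) ↔ (i : ℕ) < r)
    (c : Fin n → ℝ) (hc : ∀ i, c i ≠ 0)
    (c' : Fin n → ℝ) (hc' : ∀ j, c' j = ∏ i, c i ^ V i j) :
    ((∀ i : Fin n, r ≤ (i : ℕ) → 0 < c' i) →
      {x : Fin n → ℝ | (∀ i, x i ≠ 0) ∧
          ∀ j, (∏ k, x k ^ A k j) = c j}.ncard = 2 ^ (n - r)) ∧
    ((∃ i : Fin n, r ≤ (i : ℕ) ∧ c' i < 0) →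
      {x : Fin n → ℝ | (∀ i, x i ≠ 0) ∧
          ∀ j, (∏ k, x k ^ A k j) = c j} = ∅) := by
  obtain ⟨c, rfl⟩ : ∃ u : Fin n → ℝˣ, (fun i => (u i : ℝ)) = c :=
    ⟨fun i => Units.mk0 (c i) (hc i), rfl⟩
  replace hc' : ∀ j, c' j = ((monomialMap V c j : ℝˣ) : ℝ) := fun j => by
    rw [hc', Units.val_monomialMap]
  replace hUAV : U * A * V = diagonal fun i => S i i :=
    hUAV.trans (IsDiag.diagonal_diag hdiag).symm
  have hS : ∀ j, S j j ≠ 0 := diagonal_ne_zero_of_mul_mul_eq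
    (det_ne_zero_of_linearIndependent_intCast_cols hindep) hU hV hUAV
  let e := (unitsMonomialSolutionsEquiv A c).trans (monomialSolutionsEquivOfSmith hU hV hUAV c)
  refine ⟨fun hpos => ?_, fun ⟨i, hi, hneg⟩ => ?_⟩
  · rw [← Nat.card_coe_set_eq]
    refine (Nat.card_congr e).trans ?_
    rw [Nat.card_pi, ← Fin.prod_ite_lt_eq_pow n r 2]
    refine prod_congr rfl fun j _ => ?_
    split_ifs with hj
    · exact Real.units_natCard_zpow_eq_of_odd ((hr j).2 hj) _
    · refine Real.units_natCard_zpow_eq_of_even ?_ (hS j) ((hc' j) ▸ hpos j (not_lt.1 hj))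
      exact Int.not_odd_iff_even.1 ((hr j).not.2 hj)
  · have hroots : IsEmpty (∀ j, {t : ℝˣ // t ^ S j j = monomialMap V c j}) := ⟨fun t =>
      Real.units_zpow_ne_of_even (Int.not_odd_iff_even.1 ((hr i).not.2 (not_lt.2 hi)))
        ((hc' i) ▸ hneg) (t i) (t i).2⟩
    exact Set.isEmpty_coe_sort.1 (e.isEmpty_congr.2 hroots)

theorem stmt8 {n : ℕ} (A U V S : Matrix (Fin n) (Fin n) ℤ)
    (hindep : LinearIndependent ℚ fun j => fun i => (A i j : ℚ))
    (hU : IsUnit U.det) (hV : IsUnit V.det)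
    (hUAV : U * A * V = S)
    (hdiag : ∀ i j, i ≠ j → S i j = 0)
    (hdvd : ∀ i j : Fin n, i ≤ j → S i i ∣ S j j)
    (r : ℕ) (hr : ∀ i : Fin n, Odd (S i i) ↔ (i : ℕ) < r)
    (c : Fin n → ℝ) (hc : ∀ i, c i ≠ 0)
    (c' : Fin n → ℝ) (hc' : ∀ j, c' j = ∏ i, c i ^ V i j) :
    ((∀ i : Fin n, r ≤ (i : ℕ) → 0 < c' i) →
      {x : Fin n → ℝ | (∀ i, x i ≠ 0) ∧
          ∀ j, (∏ k, x k ^ A k j) = c j}.ncard = 2 ^ (n - r)) ∧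
    ((∃ i : Fin n, r ≤ (i : ℕ) ∧ c' i < 0) →
      {x : Fin n → ℝ | (∀ i, x i ≠ 0) ∧
          ∀ j, (∏ k, x k ^ A k j) = c j} = ∅) :=
  stmt8_general A U V S hindep hU hV hUAV hdiag r hr c hc c' hc'
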